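/- Let C be a circle or a line in ℝ², and let p, q ∉ C with p ≠ q. Then the number of pairs (r,s) ∈ C × C such that the perpendicular bisector of p and r equals the perpendicular bisector of q and s is at most 2. -/

import Mathlib

noncomputable section

def bisector (a b : EuclideanSpace ℝ (Fin 2)) : Set (EuclideanSpace ℝ (Fin 2)) :=
  {x | dist x a = dist x b}

/-- `C` is (the point set of) a circle or a line in the plane. -/
def IsCircleOrLine (C : Set (EuclideanSpace ℝ (Fin 2))) : Prop :=
  (∃ o r, 0 < r ∧ C = Metric.sphere o r) ∨
  (∃ (v : EuclideanSpace ℝ (Fin 2)) (t : ℝ), v ≠ 0 ∧ C = {x | (inner ℝ v x : ℝ) = t})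

/-!
If `B(p,r) = B(q,s)` then `s - q = κ (r - p)` and `‖s‖² - ‖q‖² = κ (‖r‖² - ‖p‖²)` for some `κ`.
Write `C` as the zero set of `f x = a‖x‖² + ⟪w, x⟫ + c`; the two relations give
`f s - f q = κ (f r - f p)`, so for `r, s ∈ C` the factor `κ = f q / f p` is the same for every
pair. Hence `s = q + κ (r - p)` is determined by `r`, and `r` lies on the generalized circle
`(κ - 1)‖x - p‖² + 2⟪q - p, x - p⟫ = 0`, which passes through `p ∉ C` and is proper since
`p ≠ q`. Three common points of two such generalized circles would lie on a line (the radical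
axis, or one of the two if it is a line) on which the other one vanishes three times, hence
identically; this contradicts either its properness or its value at `p`.
-/

open Module
open scoped RealInnerProductSpace

theorem Set.ncard_le_two_of_injOn {α β : Type*} {s : Set α} {f : α → β} (hf : s.InjOn f)
    (h : ∀ x ∈ s, ∀ y ∈ s, ∀ z ∈ s, f x = f y ∨ f x = f z ∨ f y = f z) : s.ncard ≤ 2 := by
  by_cases hs : s.Finite
  · by_contra! hlt
    obtain ⟨x, hx, y, hy, z, hz, hxy, hxz, hyz⟩ := (Set.two_lt_ncard hs).mp hlt
    rcases h x hx y hy z hz with e | e | e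
    exacts [hxy (hf hx hy e), hxz (hf hx hz e), hyz (hf hy hz e)]
  · simp [Set.Infinite.ncard hs]

section

variable {V : Type*} [NormedAddCommGroup V] [InnerProductSpace ℝ V]

theorem exists_smul_eq_of_setOf_inner_subset {u u' : V} {c c' : ℝ} (hu : u ≠ 0)
    (h : {x | ⟪u, x⟫ = c} ⊆ {x | ⟪u', x⟫ = c'}) : ∃ κ : ℝ, u' = κ • u ∧ c' = κ * c := by
  have huu : ⟪u, u⟫ ≠ 0 := inner_self_ne_zero.mpr hu
  set x₀ := (c / ⟪u, u⟫) • u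
  have hx₀ : ⟪u, x₀⟫ = c := by rw [real_inner_smul_right, div_mul_cancel₀ _ huu]
  have hx₀' : ⟪u', x₀⟫ = c' := h hx₀
  set κ := ⟪u, u'⟫ / ⟪u, u⟫
  set y := u' - κ • u
  have huy : ⟪u, y⟫ = 0 := by
    rw [inner_sub_right, real_inner_smul_right, div_mul_cancel₀ _ huu, sub_self]
  have hu'y : ⟪u', y⟫ = 0 := by
    have : ⟪u', x₀ + y⟫ = c' := h (show ⟪u, x₀ + y⟫ = c by rw [inner_add_right, hx₀, huy, add_zero])
    rwa [inner_add_right, hx₀', add_eq_left] at this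
  have hy : y = 0 := by
    rw [← inner_self_eq_zero (𝕜 := ℝ)]
    calc ⟪y, y⟫ = ⟪u', y⟫ - κ * ⟪u, y⟫ := by rw [inner_sub_left, real_inner_smul_left]
      _ = 0 := by rw [hu'y, huy]; ring
  have hu' : u' = κ • u := sub_eq_zero.mp hy
  refine ⟨κ, hu', ?_⟩
  rw [← hx₀', ← hx₀, hu', real_inner_smul_left]

/-- The zero set of `genCircleFun a w c` is a circle, a line, a point, empty, or everything. -/
def genCircleFun (a : ℝ) (w : V) (c : ℝ) (x : V) : ℝ :=
  a * ‖x‖ ^ 2 + ⟪w, x⟫ + c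

theorem genCircleFun_add_smul (a : ℝ) (w : V) (c : ℝ) (x e : V) (t : ℝ) :
    genCircleFun a w c (x + t • e) =
      a * ‖e‖ ^ 2 * t ^ 2 + (2 * a * ⟪x, e⟫ + ⟪w, e⟫) * t + genCircleFun a w c x := by
  simp only [genCircleFun, norm_add_sq_real, norm_smul, inner_add_right, real_inner_smul_right,
    Real.norm_eq_abs, mul_pow, sq_abs]
  ring

theorem genCircleFun_sub_eq_mul_sub (a : ℝ) (w : V) (c : ℝ) {p q r s : V} {κ : ℝ}
    (hsub : s - q = κ • (r - p)) (hnorm : ‖s‖ ^ 2 - ‖q‖ ^ 2 = κ * (‖r‖ ^ 2 - ‖p‖ ^ 2)) :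
    genCircleFun a w c s - genCircleFun a w c q =
      κ * (genCircleFun a w c r - genCircleFun a w c p) := by
  have hw : ⟪w, s⟫ - ⟪w, q⟫ = κ * (⟪w, r⟫ - ⟪w, p⟫) := by
    rw [← inner_sub_right, hsub, real_inner_smul_right, inner_sub_right]
  simp only [genCircleFun]
  linear_combination a * hnorm + hw

theorem genCircleFun_eq_zero_of_sub_eq_smul {p q r s : V} {κ : ℝ} (hκ : κ ≠ 0)
    (hsub : s - q = κ • (r - p)) (hnorm : ‖s‖ ^ 2 - ‖q‖ ^ 2 = κ * (‖r‖ ^ 2 - ‖p‖ ^ 2)) :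
    genCircleFun (κ - 1) ((2 : ℝ) • (q - κ • p)) ((κ + 1) * ‖p‖ ^ 2 - 2 * ⟪q, p⟫) r = 0 := by
  rw [sub_eq_iff_eq_add'] at hsub
  rw [hsub, norm_add_sq_real, norm_smul, mul_pow, Real.norm_eq_abs, sq_abs, norm_sub_sq_real,
    real_inner_smul_right, inner_sub_right] at hnorm
  refine mul_left_cancel₀ hκ ?_
  simp only [genCircleFun, real_inner_smul_left, inner_sub_left, real_inner_comm r p]
  linear_combination hnorm

theorem genCircleFun_eq_zero_left (κ : ℝ) (p q : V) :
    genCircleFun (κ - 1) ((2 : ℝ) • (q - κ • p)) ((κ + 1) * ‖p‖ ^ 2 - 2 * ⟪q, p⟫) p = 0 := by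
  simp only [genCircleFun, real_inner_smul_left, inner_sub_left, real_inner_self_eq_norm_sq]
  ring

theorem genCircleFun_eq_zero_of_three_zeros_on_line [Fact (finrank ℝ V = 2)] {a c c' : ℝ}
    {w w' : V} (hw' : w' ≠ 0) {x y z : V} (hxy : x ≠ y) (hxz : x ≠ z) (hyz : y ≠ z)
    (hx : genCircleFun 0 w' c' x = 0 ∧ genCircleFun a w c x = 0)
    (hy : genCircleFun 0 w' c' y = 0 ∧ genCircleFun a w c y = 0)
    (hz : genCircleFun 0 w' c' z = 0 ∧ genCircleFun a w c z = 0) :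
    a = 0 ∧ ∀ u, genCircleFun 0 w' c' u = 0 → genCircleFun a w c u = 0 := by
  set e := y - x
  have he : e ≠ 0 := sub_ne_zero.mpr hxy.symm
  have hline : ∀ u, genCircleFun 0 w' c' u = 0 → ∃ t : ℝ, u = x + t • e := by
    have hperp : ∀ u, genCircleFun 0 w' c' u = 0 → ⟪w', u - x⟫ = 0 := by
      intro u hu
      simp only [genCircleFun, zero_mul, zero_add] at hu hx
      rw [inner_sub_right]
      linarith [hx.1]
    intro u hu
    obtain ⟨t, ht⟩ := Submodule.mem_span_singleton.mp <|
      Submodule.mem_span_singleton_of_inner_eq_zero_of_inner_eq_zero hw' he (hperp u hu)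
        (hperp y hy.1)
    exact ⟨t, by rw [ht, add_sub_cancel]⟩
  set A := a * ‖e‖ ^ 2
  set B := 2 * a * ⟪x, e⟫ + ⟪w, e⟫
  have hquad : ∀ t : ℝ, genCircleFun a w c (x + t • e) = A * t ^ 2 + B * t := fun t => by
    rw [genCircleFun_add_smul, hx.2, add_zero]
  obtain ⟨τ, rfl⟩ := hline z hz.1
  have h1 : A + B = 0 := by
    have := hquad 1
    rwa [one_smul, add_sub_cancel, hy.2, one_pow, mul_one, mul_one, eq_comm] at this
  have hτ : A * τ ^ 2 + B * τ = 0 := (hquad τ).symm.trans hz.2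
  have hτ0 : τ ≠ 0 := by rintro rfl; simp at hxz
  have hτ1 : τ ≠ 1 := by rintro rfl; simp [e] at hyz
  have hA : A = 0 := by
    have : A * (τ * (τ - 1)) = 0 := by linear_combination hτ - τ * h1
    exact (mul_eq_zero.mp this).resolve_right (mul_ne_zero hτ0 (sub_ne_zero.mpr hτ1))
  refine ⟨(mul_eq_zero.mp hA).resolve_right (pow_ne_zero 2 (norm_ne_zero_iff.mpr he)), ?_⟩
  intro u hu
  obtain ⟨t, rfl⟩ := hline u hu
  rw [hquad, hA, show B = 0 by linarith]
  ring

theorem eq_or_eq_or_eq_of_genCircleFun_eq_zero [Fact (finrank ℝ V = 2)] {a₁ a₂ c₁ c₂ : ℝ}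
    {w₁ w₂ : V} (h₂ : a₂ ≠ 0 ∨ w₂ ≠ 0) {p : V} (hp₁ : genCircleFun a₁ w₁ c₁ p ≠ 0)
    (hp₂ : genCircleFun a₂ w₂ c₂ p = 0) {x y z : V}
    (hx : genCircleFun a₁ w₁ c₁ x = 0 ∧ genCircleFun a₂ w₂ c₂ x = 0)
    (hy : genCircleFun a₁ w₁ c₁ y = 0 ∧ genCircleFun a₂ w₂ c₂ y = 0)
    (hz : genCircleFun a₁ w₁ c₁ z = 0 ∧ genCircleFun a₂ w₂ c₂ z = 0) :
    x = y ∨ x = z ∨ y = z := by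
  by_contra! hne
  obtain ⟨hxy, hxz, hyz⟩ := hne
  by_cases ha₂ : a₂ = 0
  · subst ha₂
    have hline := genCircleFun_eq_zero_of_three_zeros_on_line (h₂.resolve_left (not_not.mpr rfl))
      hxy hxz hyz hx.symm hy.symm hz.symm
    exact hp₁ (hline.2 p hp₂)
  -- the radical axis of the two generalized circles
  set w' := a₂ • w₁ - a₁ • w₂
  set c' := a₂ * c₁ - a₁ * c₂
  have hrad : ∀ u, genCircleFun 0 w' c' u =
      a₂ * genCircleFun a₁ w₁ c₁ u - a₁ * genCircleFun a₂ w₂ c₂ u := fun u => by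
    simp only [genCircleFun, w', c', inner_sub_left, real_inner_smul_left]
    ring
  have hrad_zero : ∀ u, genCircleFun a₁ w₁ c₁ u = 0 ∧ genCircleFun a₂ w₂ c₂ u = 0 →
      genCircleFun 0 w' c' u = 0 := fun u hu => by rw [hrad, hu.1, hu.2]; ring
  have hw' : w' ≠ 0 := by
    intro hw'
    have hconst : genCircleFun 0 w' c' p = genCircleFun 0 w' c' x := by
      simp [genCircleFun, hw']
    rw [hrad_zero x hx, hrad, hp₂, mul_zero, sub_zero] at hconst
    exact mul_ne_zero ha₂ hp₁ hconst
  exact ha₂ (genCircleFun_eq_zero_of_three_zeros_on_line hw' hxy hxz hyz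
    ⟨hrad_zero x hx, hx.2⟩ ⟨hrad_zero y hy, hy.2⟩ ⟨hrad_zero z hz, hz.2⟩).1

end

local notation "E²" => EuclideanSpace ℝ (Fin 2)

theorem IsCircleOrLine.exists_eq_setOf_genCircleFun {C : Set E²} (hC : IsCircleOrLine C) :
    ∃ (a : ℝ) (w : E²) (c : ℝ), C = {x | genCircleFun a w c x = 0} := by
  rcases hC with ⟨o, ρ, hρ, rfl⟩ | ⟨v, t, -, rfl⟩
  · refine ⟨1, (-2 : ℝ) • o, ‖o‖ ^ 2 - ρ ^ 2, Set.ext fun x => ?_⟩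
    rw [Metric.mem_sphere, dist_eq_norm, ← sq_eq_sq₀ (norm_nonneg _) hρ.le, norm_sub_sq_real]
    simp only [Set.mem_ofPred_eq, genCircleFun, real_inner_smul_left, real_inner_comm o x]
    constructor <;> intro h <;> linarith
  · refine ⟨0, v, -t, Set.ext fun x => ?_⟩
    simp only [Set.mem_ofPred_eq, genCircleFun, zero_mul, zero_add, add_neg_eq_zero]

theorem bisector_eq_setOf_inner (a b : E²) :
    bisector a b = {x | ⟪b - a, x⟫ = (‖b‖ ^ 2 - ‖a‖ ^ 2) / 2} := by
  ext x
  rw [bisector, Set.mem_ofPred_eq, Set.mem_ofPred_eq, dist_eq_norm, dist_eq_norm,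
    ← sq_eq_sq₀ (norm_nonneg _) (norm_nonneg _), norm_sub_sq_real, norm_sub_sq_real,
    inner_sub_left, real_inner_comm a x, real_inner_comm b x]
  constructor <;> intro h <;> linarith

theorem exists_smul_of_bisector_eq {p q r s : E²} (hrp : r ≠ p)
    (h : bisector p r = bisector q s) :
    ∃ κ : ℝ, s - q = κ • (r - p) ∧ ‖s‖ ^ 2 - ‖q‖ ^ 2 = κ * (‖r‖ ^ 2 - ‖p‖ ^ 2) := by
  rw [bisector_eq_setOf_inner, bisector_eq_setOf_inner] at h
  obtain ⟨κ, hsub, hc⟩ := exists_smul_eq_of_setOf_inner_subset (sub_ne_zero.mpr hrp) h.subset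
  exact ⟨κ, hsub, by linarith⟩

theorem shared_bisectors_le_two (C : Set (EuclideanSpace ℝ (Fin 2))) (hC : IsCircleOrLine C)
    (p q : EuclideanSpace ℝ (Fin 2)) (hp : p ∉ C) (hq : q ∉ C) (hpq : p ≠ q) :
    Set.ncard {rs : EuclideanSpace ℝ (Fin 2) × EuclideanSpace ℝ (Fin 2) |
      rs.1 ∈ C ∧ rs.2 ∈ C ∧ bisector p rs.1 = bisector q rs.2} ≤ 2 := by
  have : Fact (finrank ℝ E² = 2) := ⟨finrank_euclideanSpace_fin⟩
  obtain ⟨a, w, c, rfl⟩ := hC.exists_eq_setOf_genCircleFun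
  set f := genCircleFun a w c
  set κ := f q / f p
  have hκ : κ ≠ 0 := div_ne_zero hq hp
  -- `g x = (κ - 1)‖x - p‖² + 2⟪q - p, x - p⟫`
  set g := genCircleFun (κ - 1) ((2 : ℝ) • (q - κ • p)) ((κ + 1) * ‖p‖ ^ 2 - 2 * ⟪q, p⟫)
  have hpair : ∀ rs ∈ {rs : E² × E² | f rs.1 = 0 ∧ f rs.2 = 0 ∧ bisector p rs.1 = bisector q rs.2},
      (f rs.1 = 0 ∧ g rs.1 = 0) ∧ rs.2 = q + κ • (rs.1 - p) := by
    rintro ⟨r, s⟩ ⟨hr, hs, hrs⟩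
    obtain ⟨k, hsub, hnorm⟩ := exists_smul_of_bisector_eq (by rintro rfl; exact hp hr) hrs
    have hk : k = κ := by
      have := genCircleFun_sub_eq_mul_sub a w c hsub hnorm
      rw [eq_div_iff hp]
      linear_combination this - hs + k * hr
    subst hk
    exact ⟨⟨hr, genCircleFun_eq_zero_of_sub_eq_smul hκ hsub hnorm⟩, eq_add_of_sub_eq' hsub⟩
  have hg : κ - 1 ≠ 0 ∨ (2 : ℝ) • (q - κ • p) ≠ 0 := by
    by_cases hκ1 : κ = 1
    · simp [hκ1, sub_eq_zero, hpq.symm]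
    · exact Or.inl (sub_ne_zero.mpr hκ1)
  refine Set.ncard_le_two_of_injOn (f := Prod.fst) ?_ fun x hx y hy z hz =>
    eq_or_eq_or_eq_of_genCircleFun_eq_zero hg hp (genCircleFun_eq_zero_left κ p q)
      (hpair x hx).1 (hpair y hy).1 (hpair z hz).1
  intro x hx y hy hxy
  exact Prod.ext hxy (by rw [(hpair x hx).2, (hpair y hy).2, hxy])
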